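/- If for every sender j with positive out-degree and every out-neighbor i of j the equality N^out·|N^out_j| = N^in·|N^in_i| holds (Condition 3), then B_j = Σ_{i∈N^out_j} (1/(N^out|N^out_j|) − 1/(N^in|N^in_i|))·Y_i = 0 identically, and therefore the conservative variances of the outward and inward Horvitz–Thompson estimators are equal: V^c(τ̂^out) = V^c(τ̂^in). -/

import Mathlib

/-! `B_j` is exactly the difference of the two scaled averages whose squares enter
`V^c(τ̂^out)` and `V^c(τ̂^in)`. Condition 3 makes every coefficient of `B_j` vanish, so the two
averages agree for every unit and every outcome, and the variances agree term by term. -/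

open Finset

/-- Out-neighbors of `j` in the directed graph `A` (`A j i` means an edge `j → i`). -/
def Nout {V : Type*} [Fintype V] (A : V → V → Prop) [DecidableRel A] (j : V) : Finset V :=
  Finset.univ.filter (fun i => A j i)

/-- In-neighbors of `i`. -/
def Nin {V : Type*} [Fintype V] (A : V → V → Prop) [DecidableRel A] (i : V) : Finset V :=
  Finset.univ.filter (fun j => A j i)

/-- Units with at least one out-neighbor. -/
def senders {V : Type*} [Fintype V] (A : V → V → Prop) [DecidableRel A] : Finset V :=
  Finset.univ.filter (fun j => (Nout A j).Nonempty)

/-- Units with at least one in-neighbor. -/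
def receivers {V : Type*} [Fintype V] (A : V → V → Prop) [DecidableRel A] : Finset V :=
  Finset.univ.filter (fun i => (Nin A i).Nonempty)

/-- Expectation on a finite probability space. -/
noncomputable def pexp {Ω : Type*} [Fintype Ω] (p : Ω → ℝ) (f : Ω → ℝ) : ℝ :=
  ∑ ω, p ω * f ω

/-- Average outcome among the out-neighbors of `j`: `Ȳ^out_j`. -/
noncomputable def Ybarout {V Ω : Type*} [Fintype V] (A : V → V → Prop) [DecidableRel A]
    (Y : V → Ω → ℝ) (j : V) (ω : Ω) : ℝ :=
  (((Nout A j).card : ℝ))⁻¹ * ∑ i ∈ Nout A j, Y i ω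

/-- In-degree–weighted sum of outcomes of `j`'s out-neighbors:
`Σ_{i∈N^out_j} (1/|N^in_i|)·Y_i`. -/
noncomputable def Ytilout {V Ω : Type*} [Fintype V] (A : V → V → Prop) [DecidableRel A]
    (Y : V → Ω → ℝ) (j : V) (ω : Ω) : ℝ :=
  ∑ i ∈ Nout A j, (((Nin A i).card : ℝ))⁻¹ * Y i ω

/-- `B_j = Σ_{i∈N^out_j} (1/(N^out·|N^out_j|) − 1/(N^in·|N^in_i|))·Y_i`. -/
noncomputable def Bq {V Ω : Type*} [Fintype V] (A : V → V → Prop) [DecidableRel A]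
    (Y : V → Ω → ℝ) (j : V) (ω : Ω) : ℝ :=
  ∑ i ∈ Nout A j,
    ((((senders A).card : ℝ) * ((Nout A j).card : ℝ))⁻¹
      - (((receivers A).card : ℝ) * ((Nin A i).card : ℝ))⁻¹) * Y i ω

/-- `D_j = Σ_{i∈N^out_j} (1/(N^out·|N^out_j|) + 1/(N^in·|N^in_i|))·Y_i`. -/
noncomputable def Dq {V Ω : Type*} [Fintype V] (A : V → V → Prop) [DecidableRel A]
    (Y : V → Ω → ℝ) (j : V) (ω : Ω) : ℝ :=
  ∑ i ∈ Nout A j,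
    ((((senders A).card : ℝ) * ((Nout A j).card : ℝ))⁻¹
      + (((receivers A).card : ℝ) * ((Nin A i).card : ℝ))⁻¹) * Y i ω

/-- Conservative variance of the outward Horvitz–Thompson estimator:
`V^c(τ̂^out) = Σ_k Σ_{j∈N^out_k} |N^out_k|·E[W_j²·1{Z_j=1}·((1/N^out)Ȳ^out_j)²
  + W_j²·1{Z_j=0}·((1/N^out)Ȳ^out_j)²]`. -/
noncomputable def VcOut {V K Ω : Type*} [Fintype V] [Fintype K] [DecidableEq K] [Fintype Ω]
    (p : Ω → ℝ) (A : V → V → Prop) [DecidableRel A] (cl : V → K)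
    (W : V → Ω → ℝ) (Z : V → Ω → Bool) (Y : V → Ω → ℝ) : ℝ :=
  ∑ k : K, ∑ j ∈ (senders A).filter (fun j' => cl j' = k),
    ((((senders A).filter (fun j' => cl j' = k)).card : ℝ)) *
      pexp p (fun ω =>
        (W j ω) ^ 2 * (if Z j ω then 1 else 0) *
            ((((senders A).card : ℝ))⁻¹ * Ybarout A Y j ω) ^ 2
          + (W j ω) ^ 2 * (if Z j ω then 0 else 1) *
            ((((senders A).card : ℝ))⁻¹ * Ybarout A Y j ω) ^ 2)

/-- Conservative variance of the inward Horvitz–Thompson estimator, defined analogously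
with `(1/N^in)·Σ_{i∈N^out_j}(1/|N^in_i|)·Y_i` in place of `(1/N^out)·Ȳ^out_j`. -/
noncomputable def VcIn {V K Ω : Type*} [Fintype V] [Fintype K] [DecidableEq K] [Fintype Ω]
    (p : Ω → ℝ) (A : V → V → Prop) [DecidableRel A] (cl : V → K)
    (W : V → Ω → ℝ) (Z : V → Ω → Bool) (Y : V → Ω → ℝ) : ℝ :=
  ∑ k : K, ∑ j ∈ (senders A).filter (fun j' => cl j' = k),
    ((((senders A).filter (fun j' => cl j' = k)).card : ℝ)) *
      pexp p (fun ω =>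
        (W j ω) ^ 2 * (if Z j ω then 1 else 0) *
            ((((receivers A).card : ℝ))⁻¹ * Ytilout A Y j ω) ^ 2
          + (W j ω) ^ 2 * (if Z j ω then 0 else 1) *
            ((((receivers A).card : ℝ))⁻¹ * Ytilout A Y j ω) ^ 2)

-- No nondegeneracy is needed: `(a * b)⁻¹ = a⁻¹ * b⁻¹` holds in `ℝ` even when a factor is `0`.
theorem Bq_eq_sub {V Ω : Type*} [Fintype V] (A : V → V → Prop) [DecidableRel A]
    (Y : V → Ω → ℝ) (j : V) (ω : Ω) :
    Bq A Y j ω = ((senders A).card : ℝ)⁻¹ * Ybarout A Y j ω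
      - ((receivers A).card : ℝ)⁻¹ * Ytilout A Y j ω := by
  simp only [Bq, Ybarout, Ytilout, sub_mul, sum_sub_distrib, mul_sum, mul_inv, mul_assoc]

theorem Bq_eq_zero {V Ω : Type*} [Fintype V] (A : V → V → Prop) [DecidableRel A]
    (Y : V → Ω → ℝ)
    (hcond : ∀ j, (Nout A j).Nonempty → ∀ i ∈ Nout A j,
      ((senders A).card : ℝ) * ((Nout A j).card : ℝ)
        = ((receivers A).card : ℝ) * ((Nin A i).card : ℝ))
    (j : V) (ω : Ω) : Bq A Y j ω = 0 :=
  sum_eq_zero fun i hi => by rw [hcond j ⟨i, hi⟩ i hi, sub_self, zero_mul]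

theorem VcOut_eq_VcIn_of_scaled_eq {V K Ω : Type*} [Fintype V] [Fintype K] [DecidableEq K]
    [Fintype Ω] (p : Ω → ℝ) (A : V → V → Prop) [DecidableRel A] (cl : V → K)
    (W : V → Ω → ℝ) (Z : V → Ω → Bool) (Y : V → Ω → ℝ)
    (h : ∀ j ω, ((senders A).card : ℝ)⁻¹ * Ybarout A Y j ω
      = ((receivers A).card : ℝ)⁻¹ * Ytilout A Y j ω) :
    VcOut p A cl W Z Y = VcIn p A cl W Z Y := by
  simp only [VcOut, VcIn, h]

theorem stmt16_general {V K Ω : Type*} [Fintype V] [Fintype K] [DecidableEq K] [Fintype Ω]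
    (p : Ω → ℝ) (A : V → V → Prop) [DecidableRel A] (cl : V → K)
    (W : V → Ω → ℝ) (Z : V → Ω → Bool) (Y : V → Ω → ℝ)
    (hcond : ∀ j, (Nout A j).Nonempty → ∀ i ∈ Nout A j,
      ((senders A).card : ℝ) * ((Nout A j).card : ℝ)
        = ((receivers A).card : ℝ) * ((Nin A i).card : ℝ)) :
    (∀ j ω, Bq A Y j ω = 0) ∧ VcOut p A cl W Z Y = VcIn p A cl W Z Y := by
  have hB := Bq_eq_zero A Y hcond
  refine ⟨hB, VcOut_eq_VcIn_of_scaled_eq p A cl W Z Y fun j ω => ?_⟩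
  rw [← sub_eq_zero, ← Bq_eq_sub, hB]

/-- if `N^out·|N^out_j| = N^in·|N^in_i|` for every sender `j` and every
out-neighbor `i` of `j` (Condition 3), then `B_j` vanishes identically and the conservative
variances of the outward and inward Horvitz–Thompson estimators coincide. -/
theorem stmt16 {V K Ω : Type*} [Fintype V] [Fintype K] [DecidableEq K] [Fintype Ω]
    (p : Ω → ℝ) (A : V → V → Prop) [DecidableRel A] (cl : V → K)
    (W : V → Ω → ℝ) (Z : V → Ω → Bool) (Y : V → Ω → ℝ)
    (hNout : 0 < (senders A).card) (hNin : 0 < (receivers A).card)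
    (hcond : ∀ j, (Nout A j).Nonempty → ∀ i ∈ Nout A j,
      ((senders A).card : ℝ) * ((Nout A j).card : ℝ)
        = ((receivers A).card : ℝ) * ((Nin A i).card : ℝ)) :
    (∀ j ω, Bq A Y j ω = 0) ∧ VcOut p A cl W Z Y = VcIn p A cl W Z Y :=
  stmt16_general p A cl W Z Y hcond
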